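/- arXiv:2502.09499 — 2 statements merged into one kernel-verified Lean document; each statement's English description precedes it below -/
import Mathlib

section
/- Let G be a compact group with Haar probability measure and χ the character of a finite-dimensional irreducible unitary representation of dimension d_χ. Then ∫_G ∫_G χ(y⁻¹ z⁻¹ y z) dy dz = 1 / d_χ. -/
open MeasureTheory TensorProduct

/-!
Averaging `B ↦ ∫ ρ(y)⁻¹ B ρ(y) dy` yields an operator commuting with `ρ`, hence by Schur's lemma a
scalar, which taking traces identifies as `(tr B / d) • 1`. For `B = ρ(z⁻¹)` this gives
`∫ χ(y⁻¹ z⁻¹ y z) dy = χ(z⁻¹) χ(z) / d`. Finally `χ(z⁻¹) χ(z)` is the trace of `X ↦ ρ(z⁻¹) X ρ(z)`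
on `End V`, so `∫ χ(z⁻¹) χ(z) dz` is the trace of the averaging operator `X ↦ (tr X / d) • 1`,
namely `1`.
-/

theorem LinearMap.trace_mulLeft_comp_mulRight {R M : Type*} [CommRing R] [AddCommGroup M]
    [Module R M] [Module.Free R M] [Module.Finite R M] (A B : Module.End R M) :
    trace R (Module.End R M) (mulLeft R A ∘ₗ mulRight R B) = trace R M A * trace R M B := by
  let e : Module.Dual R M ⊗[R] M ≃ₗ[R] Module.End R M := dualTensorHomEquiv R M M
  have h : e.conj (map (Module.Dual.transpose (R := R) B) A) =
      mulLeft R A ∘ₗ mulRight R B := by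
    rw [LinearEquiv.conj_apply, LinearEquiv.comp_toLinearMap_symm_eq]
    refine TensorProduct.ext' fun f v => ?_
    ext x
    simp [e, Module.Dual.transpose_apply]
  rw [← h, trace_conj' (M := Module.Dual R M ⊗[R] M), trace_tensorProduct', trace_transpose',
    mul_comm]

theorem ContinuousLinearMap.trace_mulLeftRight {𝕜 V : Type*} [NontriviallyNormedField 𝕜]
    [CompleteSpace 𝕜] [NormedAddCommGroup V] [NormedSpace 𝕜 V] [FiniteDimensional 𝕜 V]
    (A B : V →L[𝕜] V) :
    LinearMap.trace 𝕜 (V →L[𝕜] V) (mulLeftRight 𝕜 (V →L[𝕜] V) A B) =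
      LinearMap.trace 𝕜 V A * LinearMap.trace 𝕜 V B := by
  let e : Module.End 𝕜 V ≃ₗ[𝕜] (V →L[𝕜] V) := LinearMap.toContinuousLinearMap
  have h : e.conj (LinearMap.mulLeft 𝕜 (A : Module.End 𝕜 V) ∘ₗ LinearMap.mulRight 𝕜 ↑B) =
      mulLeftRight 𝕜 (V →L[𝕜] V) A B := by
    ext X v
    rfl
  rw [← h, LinearMap.trace_conj', LinearMap.trace_mulLeft_comp_mulRight]

theorem integral_trace {X V : Type*} [MeasurableSpace X] {μ : Measure X}
    [NormedAddCommGroup V] [NormedSpace ℂ V] [FiniteDimensional ℂ V] {f : X → V →L[ℂ] V}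
    (hf : Integrable f μ) :
    ∫ x, LinearMap.trace ℂ V (f x : V →ₗ[ℂ] V) ∂μ =
      LinearMap.trace ℂ V ((∫ x, f x ∂μ : V →L[ℂ] V) : V →ₗ[ℂ] V) :=
  (LinearMap.toContinuousLinearMap ((LinearMap.trace ℂ V).comp
    (ContinuousLinearMap.coeLM ℂ))).integral_comp_comm hf

theorem Module.End.exists_eq_smul_one_of_forall_commute {K V G : Type*} [Field K] [IsAlgClosed K]
    [AddCommGroup V] [Module K V] [FiniteDimensional K V] [Group G] (ρ : G →* Module.End K V)
    (hirr : ∀ W : Submodule K V, (∀ g, W.map (ρ g) = W) → W = ⊥ ∨ W = ⊤)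
    {T : Module.End K V} (hT : ∀ g, Commute T (ρ g)) : ∃ c : K, T = c • 1 := by
  cases subsingleton_or_nontrivial V
  · exact ⟨0, Subsingleton.elim _ _⟩
  obtain ⟨c, hc⟩ := T.exists_eigenvalue
  have hmaps (g : G) : Set.MapsTo (ρ g) (T.eigenspace c) (T.eigenspace c) :=
    T.mapsTo_genEigenspace_of_comm (hT g) c 1
  have hinv (g : G) : (T.eigenspace c).map (ρ g) = T.eigenspace c := by
    refine le_antisymm (Submodule.map_le_iff_le_comap.2 (hmaps g)) fun x hx => ?_
    refine ⟨ρ g⁻¹ x, hmaps g⁻¹ hx, ?_⟩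
    rw [← Module.End.mul_apply, ← map_mul, mul_inv_cancel, map_one, Module.End.one_apply]
  have htop : T.eigenspace c = ⊤ := (hirr _ hinv).resolve_left hc
  refine ⟨c, LinearMap.ext fun v => ?_⟩
  simpa using Module.End.mem_eigenspace_iff.1 (htop ▸ Submodule.mem_top : v ∈ T.eigenspace c)

theorem MeasureTheory.Measure.isMulRightInvariant_of_isProbabilityMeasure
    {G : Type*} [Group G] [TopologicalSpace G] [IsTopologicalGroup G] [LocallyCompactSpace G]
    [MeasurableSpace G] [BorelSpace G] (μ : Measure G) [μ.IsHaarMeasure]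
    [IsProbabilityMeasure μ] : μ.IsMulRightInvariant where
  map_mul_right_eq_self g := by
    have : IsProbabilityMeasure (μ.map (· * g)) :=
      isProbabilityMeasure_map (measurable_mul_const g).aemeasurable
    exact Measure.isHaarMeasure_eq_of_isProbabilityMeasure _ μ

section Averaging

open ContinuousLinearMap

variable {G V : Type*} [Group G] [TopologicalSpace G] [IsTopologicalGroup G] [CompactSpace G]
  [MeasurableSpace G] [BorelSpace G] (μ : Measure G)
  [NormedAddCommGroup V] [NormedSpace ℂ V] (ρ : G →* (V →L[ℂ] V))

noncomputable def conjAverage : (V →L[ℂ] V) →L[ℂ] (V →L[ℂ] V) :=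
  ∫ y, mulLeftRight ℂ (V →L[ℂ] V) (ρ y⁻¹) (ρ y) ∂μ

variable {ρ} [IsFiniteMeasure μ]

theorem integrable_mulLeftRight_inv (hρ : Continuous ρ) :
    Integrable (fun y => mulLeftRight ℂ (V →L[ℂ] V) (ρ y⁻¹) (ρ y)) μ :=
  have hc : Continuous fun y => mulLeftRight ℂ (V →L[ℂ] V) (ρ y⁻¹) (ρ y) :=
    ((mulLeftRight ℂ _).continuous.comp (hρ.comp continuous_inv)).clm_apply hρ
  -- naming `E` lets Lean match the normed topology with the `ContinuousLinearMap` one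
  hc.integrable_of_hasCompactSupport (E := (V →L[ℂ] V) →L[ℂ] (V →L[ℂ] V)) (.of_compactSpace _)

theorem integrable_inv_mul_mul (hρ : Continuous ρ) (B : V →L[ℂ] V) :
    Integrable (fun y => ρ y⁻¹ * B * ρ y) μ := by
  simpa only [mulLeftRight_apply] using
    (integrable_mulLeftRight_inv μ hρ).apply_continuousLinearMap B

theorem conjAverage_apply (hρ : Continuous ρ) (B : V →L[ℂ] V) :
    conjAverage μ ρ B = ∫ y, ρ y⁻¹ * B * ρ y ∂μ :=
  integral_apply (integrable_mulLeftRight_inv μ hρ) B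

theorem commute_conjAverage_apply [μ.IsMulRightInvariant] (hρ : Continuous ρ)
    (B : V →L[ℂ] V) (g : G) : Commute (conjAverage μ ρ B) (ρ g) := by
  have hint := integrable_inv_mul_mul μ hρ B
  have hinv : conjAverage μ ρ B = ρ g⁻¹ * conjAverage μ ρ B * ρ g := by
    calc conjAverage μ ρ B = ∫ y, ρ (y * g)⁻¹ * B * ρ (y * g) ∂μ := by
          rw [conjAverage_apply μ hρ, integral_mul_right_eq_self (fun y => ρ y⁻¹ * B * ρ y)]
      _ = ∫ y, ρ g⁻¹ * (ρ y⁻¹ * B * ρ y) * ρ g ∂μ := by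
          simp only [mul_inv_rev, map_mul, mul_assoc]
      _ = ρ g⁻¹ * conjAverage μ ρ B * ρ g := by
          rw [integral_mul_const_of_integrable (hint.const_mul _),
            integral_const_mul_of_integrable hint, conjAverage_apply μ hρ]
  calc conjAverage μ ρ B * ρ g = ρ g * (ρ g⁻¹ * conjAverage μ ρ B * ρ g) := by
        rw [← mul_assoc, ← mul_assoc, ← map_mul, mul_inv_cancel, map_one, one_mul]
    _ = ρ g * conjAverage μ ρ B := by rw [← hinv]

variable [FiniteDimensional ℂ V]

theorem trace_conjAverage_apply [IsProbabilityMeasure μ] (hρ : Continuous ρ) (B : V →L[ℂ] V) :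
    LinearMap.trace ℂ V (conjAverage μ ρ B) = LinearMap.trace ℂ V B := by
  have htr (y : G) : LinearMap.trace ℂ V ↑(ρ y⁻¹ * B * ρ y) = LinearMap.trace ℂ V B := by
    rw [toLinearMap_mul, toLinearMap_mul, LinearMap.trace_mul_cycle, ← toLinearMap_mul,
      ← map_mul, mul_inv_cancel, map_one, toLinearMap_one, one_mul]
  rw [conjAverage_apply μ hρ, ← integral_trace (integrable_inv_mul_mul μ hρ B)]
  simp only [htr, integral_const, probReal_univ, one_smul]

theorem conjAverage_apply_eq_smul_one [IsProbabilityMeasure μ] [μ.IsMulRightInvariant]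
    (hρ : Continuous ρ)
    (hirr : ∀ W : Submodule ℂ V, (∀ g, W.map (ρ g : V →ₗ[ℂ] V) = W) → W = ⊥ ∨ W = ⊤)
    (B : V →L[ℂ] V) :
    conjAverage μ ρ B = (LinearMap.trace ℂ V B / Module.finrank ℂ V) • 1 := by
  obtain ⟨c, hc⟩ := Module.End.exists_eq_smul_one_of_forall_commute
    (toLinearMapRingHom.toMonoidHom.comp ρ) hirr
    fun g => (commute_conjAverage_apply μ hρ B g).map toLinearMapRingHom
  have hc' : conjAverage μ ρ B = c • 1 := coe_injective hc
  rcases subsingleton_or_nontrivial V with _ | _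
  · exact Subsingleton.elim _ _
  have htr := trace_conjAverage_apply μ hρ B
  rw [hc'] at htr
  simp only [toLinearMap_smul, toLinearMap_one, map_smul, LinearMap.trace_one, smul_eq_mul] at htr
  have hn : (Module.finrank ℂ V : ℂ) ≠ 0 := Nat.cast_ne_zero.2 Module.finrank_pos.ne'
  rw [hc', ← htr, mul_div_cancel_right₀ _ hn]

theorem trace_conjAverage (hρ : Continuous ρ) :
    LinearMap.trace ℂ (V →L[ℂ] V) (conjAverage μ ρ) =
      ∫ y, LinearMap.trace ℂ V (ρ y⁻¹) * LinearMap.trace ℂ V (ρ y) ∂μ := by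
  rw [conjAverage, ← integral_trace (integrable_mulLeftRight_inv μ hρ)]
  simp only [trace_mulLeftRight]

theorem integral_trace_inv_mul_trace [Nontrivial V] [IsProbabilityMeasure μ]
    [μ.IsMulRightInvariant] (hρ : Continuous ρ)
    (hirr : ∀ W : Submodule ℂ V, (∀ g, W.map (ρ g : V →ₗ[ℂ] V) = W) → W = ⊥ ∨ W = ⊤) :
    ∫ y, LinearMap.trace ℂ V (ρ y⁻¹) * LinearMap.trace ℂ V (ρ y) ∂μ = 1 := by
  have hn : (Module.finrank ℂ V : ℂ) ≠ 0 := Nat.cast_ne_zero.2 Module.finrank_pos.ne'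
  have hsmul : (conjAverage μ ρ : (V →L[ℂ] V) →ₗ[ℂ] (V →L[ℂ] V)) =
      LinearMap.smulRight ((Module.finrank ℂ V : ℂ)⁻¹ • (LinearMap.trace ℂ V ∘ₗ coeLM ℂ)) 1 := by
    ext B : 1
    simp [conjAverage_apply_eq_smul_one μ hρ hirr B, div_eq_inv_mul]
  rw [← trace_conjAverage μ hρ, hsmul, LinearMap.trace_smulRight]
  simp [hn]

theorem integral_trace_commutator [IsProbabilityMeasure μ] [μ.IsMulRightInvariant]
    (hρ : Continuous ρ)
    (hirr : ∀ W : Submodule ℂ V, (∀ g, W.map (ρ g : V →ₗ[ℂ] V) = W) → W = ⊥ ∨ W = ⊤) (z : G) :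
    ∫ y, LinearMap.trace ℂ V (ρ (y⁻¹ * z⁻¹ * y * z)) ∂μ =
      LinearMap.trace ℂ V (ρ z⁻¹) * LinearMap.trace ℂ V (ρ z) / Module.finrank ℂ V := by
  have hint := integrable_inv_mul_mul μ hρ (ρ z⁻¹)
  simp only [map_mul]
  rw [integral_trace (hint.mul_const _), integral_mul_const_of_integrable hint,
    ← conjAverage_apply μ hρ, conjAverage_apply_eq_smul_one μ hρ hirr]
  simp [div_mul_eq_mul_div]

theorem integral_integral_trace_commutator [IsProbabilityMeasure μ] [μ.IsMulRightInvariant]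
    (hρ : Continuous ρ)
    (hirr : ∀ W : Submodule ℂ V, (∀ g, W.map (ρ g : V →ₗ[ℂ] V) = W) → W = ⊥ ∨ W = ⊤) :
    ∫ z, ∫ y, LinearMap.trace ℂ V (ρ (y⁻¹ * z⁻¹ * y * z)) ∂μ ∂μ = 1 / Module.finrank ℂ V := by
  simp only [integral_trace_commutator μ hρ hirr, integral_div]
  rcases subsingleton_or_nontrivial V with _ | _
  · simp [Module.finrank_zero_of_subsingleton]
  · rw [integral_trace_inv_mul_trace μ hρ hirr]

end Averaging

theorem compact_group_character_commutator_integral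
    {G : Type*} [Group G] [TopologicalSpace G] [IsTopologicalGroup G] [CompactSpace G]
    [MeasurableSpace G] [BorelSpace G]
    (μ : Measure G) [μ.IsHaarMeasure] [IsProbabilityMeasure μ]
    {V : Type*} [NormedAddCommGroup V] [InnerProductSpace ℂ V] [FiniteDimensional ℂ V]
    (ρ : G →* (V ≃ₗᵢ[ℂ] V))
    (hcont : Continuous fun p : G × V => ρ p.1 p.2)
    (hirr : ∀ W : Submodule ℂ V,
      (∀ g : G, W.map ((ρ g).toLinearEquiv : V →ₗ[ℂ] V) = W) → W = ⊥ ∨ W = ⊤)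
    (χ : G → ℂ) (hχ : ∀ g, χ g = LinearMap.trace ℂ V ((ρ g).toLinearEquiv : V →ₗ[ℂ] V)) :
    ∫ z, ∫ y, χ (y⁻¹ * z⁻¹ * y * z) ∂μ ∂μ = 1 / (Module.finrank ℂ V : ℂ) := by
  have := μ.isMulRightInvariant_of_isProbabilityMeasure
  let ρL : G →* (V →L[ℂ] V) :=
    { toFun g := (ρ g).toContinuousLinearEquiv
      map_one' := by ext; simp
      map_mul' g h := by ext; simp }
  have hρL : Continuous ρL :=
    continuous_clm_apply.2 fun v => hcont.comp (continuous_id.prodMk continuous_const)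
  simp only [hχ]
  exact integral_integral_trace_commutator μ hρL hirr
end

section
/- The number of up-down tableaux of shape ∅ and length r is 0 if r is odd, and equals (r-1)(r-3)⋯3·1 = (r-1)!! if r is even. -/
/-- Two Young diagrams differ by adding or removing exactly one box. -/
def UpDownStep (μ ν : YoungDiagram) : Prop :=
  (μ ≤ ν ∧ ν.card = μ.card + 1) ∨ (ν ≤ μ ∧ μ.card = ν.card + 1)

/-- The set of up-down tableaux of length `r` and shape `lam`. -/
def UpDownTableaux (r : ℕ) (lam : YoungDiagram) : Set (Fin (r + 1) → YoungDiagram) :=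
  {T | T 0 = ⊥ ∧ T (Fin.last r) = lam ∧
    ∀ i : Fin r, UpDownStep (T i.castSucc) (T i.succ)}

/-!
Young's lattice is a differential poset. A diagram has one more addable cell than removable cells,
hence one more upper cover than lower covers; and two distinct diagrams `μ ≠ ν` have as many common
upper covers as common lower covers, since these can only be `μ ⊔ ν` and `μ ⊓ ν`, whose sizes add
up to `|μ| + |ν|`. So the up and down operators satisfy `DU = UD + I`. Writing `f_r^μ` for the
number of up-down tableaux of length `r` and shape `μ`, induction on `r` then gives
`∑_{μ ⋖ ν} f_{r+1}^ν = (r + 1) f_r^μ`. As `∅` has no lower covers, `f_{r+2}^∅ = (r + 1) f_r^∅`,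
while `f_0^∅ = 1` and `f_1^∅ = 0`.
-/

open Finset

theorem Finset.sum_sum_eq_sum_card_inter_smul {α β M : Type*} [AddCommMonoid M] [DecidableEq α]
    {s : Finset α} {t : Finset β} {G : α → Finset β} {F : β → Finset α}
    (hGF : ∀ a b, b ∈ G a ↔ a ∈ F b) (hG : ∀ a ∈ s, G a ⊆ t) (g : β → M) :
    ∑ a ∈ s, ∑ b ∈ G a, g b = ∑ b ∈ t, #(s ∩ F b) • g b := by
  rw [sum_comm' (t' := t) (s' := fun b => s ∩ F b)]
  · simp_rw [sum_const]
  · intro a b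
    rw [mem_inter, ← hGF]
    exact ⟨fun h => ⟨h, hG a h.1 h.2⟩, fun h => h.1⟩

namespace YoungDiagram

variable {μ ν ρ : YoungDiagram}

instance : DecidableEq YoungDiagram := fun _ _ => decidable_of_iff _ YoungDiagram.ext_iff.symm

lemma notMem_and_forall_lt_mem_iff {i j : ℕ} :
    ((i, j) ∉ μ ∧ ∀ c < (i, j), c ∈ μ) ↔ j = μ.rowLen i ∧ ∀ k < i, j < μ.rowLen k := by
  constructor
  · rintro ⟨hij, hlt⟩
    have hj := not_lt.1 (mt mem_iff_lt_rowLen.2 hij)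
    refine ⟨hj.antisymm' (not_lt.1 fun h => ?_), fun k hk => ?_⟩
    · exact (mem_iff_lt_rowLen.1 (hlt (i, μ.rowLen i) (Prod.mk_lt_mk_of_le_of_lt le_rfl h))).false
    · exact mem_iff_lt_rowLen.1 (hlt (k, j) (Prod.mk_lt_mk_of_lt_of_le hk le_rfl))
  · rintro ⟨rfl, hlt⟩
    refine ⟨fun h => (mem_iff_lt_rowLen.1 h).false, fun ⟨a, b⟩ hab => mem_iff_lt_rowLen.2 ?_⟩
    obtain ⟨ha, hb⟩ := hab.le
    rcases ha.lt_or_eq with ha | rfl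
    · exact hb.trans_lt (hlt a ha)
    · exact lt_of_le_of_ne hb fun h => hab.ne (Prod.ext rfl h)

lemma mem_and_forall_ge_eq_iff {i j : ℕ} :
    ((i, j) ∈ μ ∧ ∀ c ∈ μ, (i, j) ≤ c → c = (i, j)) ↔
      j + 1 = μ.rowLen i ∧ μ.rowLen (i + 1) ≤ j := by
  constructor
  · rintro ⟨hij, hmax⟩
    have hj := mem_iff_lt_rowLen.1 hij
    refine ⟨le_antisymm hj (not_lt.1 fun h => ?_), not_lt.1 fun h => ?_⟩
    · simpa using hmax (i, j + 1) (mem_iff_lt_rowLen.2 h) (by simp)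
    · simpa using hmax (i + 1, j) (mem_iff_lt_rowLen.2 h) (by simp)
  · rintro ⟨hj, hnext⟩
    refine ⟨mem_iff_lt_rowLen.2 (by omega), fun ⟨a, b⟩ hab hle => ?_⟩
    obtain ⟨ha, hb⟩ := Prod.mk_le_mk.1 hle
    have hb' := mem_iff_lt_rowLen.1 hab
    obtain rfl : i = a := ha.eq_of_not_lt fun h => by
      have := μ.rowLen_anti (i + 1) a h
      omega
    exact Prod.ext rfl (by omega)

def removableRows (μ : YoungDiagram) : Finset ℕ :=
  {i ∈ range (μ.colLen 0) | μ.rowLen (i + 1) < μ.rowLen i}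

lemma mem_removableRows {i : ℕ} : i ∈ removableRows μ ↔ μ.rowLen (i + 1) < μ.rowLen i := by
  rw [removableRows, mem_filter, mem_range, and_iff_right_iff_imp, ← mem_iff_lt_colLen]
  exact fun h => mem_iff_lt_rowLen.2 (by omega)

def addableCells (μ : YoungDiagram) : Finset (ℕ × ℕ) :=
  insert (0, μ.rowLen 0) ((removableRows μ).image fun i => (i + 1, μ.rowLen (i + 1)))

def removableCells (μ : YoungDiagram) : Finset (ℕ × ℕ) :=
  (removableRows μ).image fun i => (i, μ.rowLen i - 1)

lemma mem_addableCells {c : ℕ × ℕ} : c ∈ addableCells μ ↔ c ∉ μ ∧ ∀ d < c, d ∈ μ := by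
  obtain ⟨i, j⟩ := c
  rw [notMem_and_forall_lt_mem_iff, addableCells, mem_insert, mem_image]
  simp only [mem_removableRows, Prod.mk.injEq]
  cases i with
  | zero => simp [eq_comm]
  | succ i =>
    simp only [Nat.succ_ne_zero, false_and, false_or, add_left_inj, Nat.lt_succ_iff]
    constructor
    · rintro ⟨i, h, rfl, rfl⟩
      exact ⟨rfl, fun k hk => h.trans_le (μ.rowLen_anti k i hk)⟩
    · rintro ⟨rfl, h⟩
      exact ⟨i, h i le_rfl, rfl, rfl⟩

lemma mem_removableCells {c : ℕ × ℕ} :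
    c ∈ removableCells μ ↔ c ∈ μ ∧ ∀ d ∈ μ, c ≤ d → d = c := by
  obtain ⟨i, j⟩ := c
  rw [mem_and_forall_ge_eq_iff, removableCells, mem_image]
  simp only [mem_removableRows, Prod.mk.injEq]
  constructor
  · rintro ⟨_, h, rfl, rfl⟩
    omega
  · rintro ⟨h, hnext⟩
    exact ⟨i, by omega, rfl, by omega⟩

lemma card_addableCells (μ : YoungDiagram) :
    #(addableCells μ) = #(removableCells μ) + 1 := by
  rw [addableCells, card_insert_of_notMem (by simp), removableCells,
    card_image_of_injective _ fun i i' h => by simpa using congrArg Prod.fst h,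
    card_image_of_injective _ fun i i' h => by simpa using congrArg Prod.fst h]

def insertCell (μ : YoungDiagram) (c : ℕ × ℕ) (hc : ∀ d < c, d ∈ μ) : YoungDiagram where
  cells := insert c μ.cells
  isLowerSet := by
    intro a b hba ha
    simp only [coe_insert, Set.mem_insert_iff, mem_coe, mem_cells] at ha ⊢
    rcases ha with rfl | ha
    · exact hba.eq_or_lt.imp id (hc b)
    · exact Or.inr (μ.isLowerSet hba ha)

def eraseCell (μ : YoungDiagram) (c : ℕ × ℕ) (hc : ∀ d ∈ μ, c ≤ d → d = c) : YoungDiagram where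
  cells := μ.cells.erase c
  isLowerSet := by
    rw [coe_erase]
    exact μ.isLowerSet.erase hc

lemma mem_insertCell {c d : ℕ × ℕ} {hc : ∀ d < c, d ∈ μ} :
    d ∈ insertCell μ c hc ↔ d = c ∨ d ∈ μ := by
  show d ∈ insert c μ.cells ↔ _
  rw [mem_insert, mem_cells]

lemma mem_eraseCell {c d : ℕ × ℕ} {hc : ∀ d ∈ μ, c ≤ d → d = c} :
    d ∈ eraseCell μ c hc ↔ d ≠ c ∧ d ∈ μ := by
  show d ∈ μ.cells.erase c ↔ _
  rw [mem_erase, mem_cells]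

def upperCovers (μ : YoungDiagram) : Finset YoungDiagram :=
  (addableCells μ).attach.image fun c : addableCells μ => insertCell μ c (mem_addableCells.1 c.2).2

def lowerCovers (μ : YoungDiagram) : Finset YoungDiagram :=
  (removableCells μ).attach.image fun c : removableCells μ =>
    eraseCell μ c (mem_removableCells.1 c.2).2

lemma mem_upperCovers : ν ∈ upperCovers μ ↔ μ ≤ ν ∧ ν.card = μ.card + 1 := by
  rw [← cells_subset_iff, eq_comm, YoungDiagram.card, YoungDiagram.card,
    ← exists_eq_insert_iff, upperCovers, mem_image]
  constructor
  · rintro ⟨⟨c, hc⟩, -, rfl⟩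
    exact ⟨c, (mem_cells c).not.2 (mem_addableCells.1 hc).1, rfl⟩
  · rintro ⟨c, hcμ, hν⟩
    have hcν : c ∈ ν := (mem_cells c).1 (hν ▸ mem_insert_self c μ.cells)
    have hc : c ∈ addableCells μ := by
      refine mem_addableCells.2 ⟨(mem_cells c).not.1 hcμ, fun d hd => ?_⟩
      have hdν : d ∈ ν.cells := (mem_cells d).2 (ν.isLowerSet hd.le hcν)
      rw [← hν, mem_insert] at hdν
      exact (mem_cells d).1 (hdν.resolve_left hd.ne)
    exact ⟨⟨c, hc⟩, mem_attach _ _, YoungDiagram.ext hν⟩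

lemma mem_lowerCovers : ρ ∈ lowerCovers μ ↔ ρ ≤ μ ∧ μ.card = ρ.card + 1 := by
  rw [← cells_subset_iff, eq_comm, YoungDiagram.card, YoungDiagram.card,
    ← exists_eq_insert_iff, lowerCovers, mem_image]
  constructor
  · rintro ⟨⟨c, hc⟩, -, rfl⟩
    have hcμ : c ∈ μ.cells := (mem_cells c).2 (mem_removableCells.1 hc).1
    exact ⟨c, notMem_erase c μ.cells, insert_erase hcμ⟩
  · rintro ⟨c, hcρ, hμ⟩
    have hc : c ∈ removableCells μ := by
      refine mem_removableCells.2 ⟨(mem_cells c).1 (hμ ▸ mem_insert_self c ρ.cells),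
        fun d hd hcd => ?_⟩
      by_contra hne
      rw [← mem_cells, ← hμ, mem_insert, or_iff_right hne, mem_cells] at hd
      exact hcρ ((mem_cells c).2 (ρ.isLowerSet hcd hd))
    exact ⟨⟨c, hc⟩, mem_attach _ _, YoungDiagram.ext (by simp [eraseCell, ← hμ, hcρ])⟩

lemma card_upperCovers (μ : YoungDiagram) : #(upperCovers μ) = #(lowerCovers μ) + 1 := by
  rw [upperCovers, lowerCovers, card_image_of_injective, card_image_of_injective, card_attach,
    card_attach, card_addableCells]
  · rintro ⟨c, hc⟩ ⟨c', hc'⟩ h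
    dsimp only at h
    have hnot : c' ∉ eraseCell μ c _ := h.symm ▸ fun hmem => (mem_eraseCell.1 hmem).1 rfl
    exact Subtype.ext (by_contra fun hne =>
      hnot (mem_eraseCell.2 ⟨fun h' => hne h'.symm, (mem_removableCells.1 hc').1⟩))
  · rintro ⟨c, hc⟩ ⟨c', hc'⟩ h
    dsimp only at h
    have hmem : c ∈ insertCell μ c' _ := h ▸ mem_insertCell.2 (Or.inl rfl)
    exact Subtype.ext ((mem_insertCell.1 hmem).resolve_right (mem_addableCells.1 hc).1)

lemma mem_lowerCovers_iff_mem_upperCovers : ρ ∈ lowerCovers μ ↔ μ ∈ upperCovers ρ := by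
  rw [mem_lowerCovers, mem_upperCovers]

lemma card_bot : (⊥ : YoungDiagram).card = 0 := rfl

lemma lowerCovers_bot : lowerCovers ⊥ = ∅ :=
  eq_empty_of_forall_notMem fun _ hρ => by simpa [card_bot] using (mem_lowerCovers.1 hρ).2

lemma card_lt_card (h : μ < ν) : μ.card < ν.card :=
  Finset.card_lt_card (cells_ssubset_iff.2 h)

lemma covBy_of_card_eq (h : μ ≤ ν) (hc : ν.card = μ.card + 1) : μ ⋖ ν :=
  ⟨h.lt_of_ne (by rintro rfl; omega), fun _ h₁ h₂ => by
    have := card_lt_card h₁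
    have := card_lt_card h₂
    omega⟩

lemma card_sup_add_card_inf (μ ν : YoungDiagram) :
    (μ ⊔ ν).card + (μ ⊓ ν).card = μ.card + ν.card := by
  simp only [YoungDiagram.card, cells_sup, cells_inf]
  exact card_union_add_card_inter _ _

lemma card_upperCovers_inter_of_ne (h : μ ≠ ν) :
    #(upperCovers μ ∩ upperCovers ν) = #(lowerCovers μ ∩ lowerCovers ν) := by
  have hsup : ∀ κ ∈ upperCovers μ ∩ upperCovers ν, μ ⊔ ν = κ := by
    intro κ hκ
    simp only [mem_inter, mem_upperCovers] at hκ
    exact (covBy_of_card_eq hκ.1.1 hκ.1.2).wcovBy.sup_eq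
      (covBy_of_card_eq hκ.2.1 hκ.2.2).wcovBy h
  have hinf : ∀ κ ∈ lowerCovers μ ∩ lowerCovers ν, μ ⊓ ν = κ := by
    intro κ hκ
    simp only [mem_inter, mem_lowerCovers] at hκ
    exact (covBy_of_card_eq hκ.1.1 hκ.1.2).wcovBy.inf_eq
      (covBy_of_card_eq hκ.2.1 hκ.2.2).wcovBy h
  have hcard := card_sup_add_card_inf μ ν
  refine card_nbij' (fun _ => μ ⊓ ν) (fun _ => μ ⊔ ν) (fun κ hκ => ?_) (fun κ hκ => ?_) hsup hinf
  · obtain rfl := hsup κ hκ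
    simp only [coe_inter, Set.mem_inter_iff, mem_coe, mem_upperCovers, mem_lowerCovers] at hκ ⊢
    exact ⟨⟨inf_le_left, by omega⟩, inf_le_right, by omega⟩
  · obtain rfl := hinf κ hκ
    simp only [coe_inter, Set.mem_inter_iff, mem_coe, mem_upperCovers, mem_lowerCovers] at hκ ⊢
    exact ⟨⟨le_sup_left, by omega⟩, le_sup_right, by omega⟩

theorem sum_upperCovers_sum_lowerCovers {M : Type*} [AddCommMonoid M] (μ : YoungDiagram)
    (g : YoungDiagram → M) :
    ∑ ν ∈ upperCovers μ, ∑ ρ ∈ lowerCovers ν, g ρ =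
      ∑ ν ∈ lowerCovers μ, ∑ ρ ∈ upperCovers ν, g ρ + g μ := by
  set t := insert μ ((upperCovers μ).biUnion lowerCovers ∪ (lowerCovers μ).biUnion upperCovers)
  rw [sum_sum_eq_sum_card_inter_smul (t := t) (fun _ _ => mem_lowerCovers_iff_mem_upperCovers)
      fun ν hν ρ hρ => mem_insert_of_mem (mem_union_left _ (mem_biUnion.2 ⟨ν, hν, hρ⟩)),
    sum_sum_eq_sum_card_inter_smul (t := t) (fun _ _ => mem_lowerCovers_iff_mem_upperCovers.symm)
      fun ν hν ρ hρ => mem_insert_of_mem (mem_union_right _ (mem_biUnion.2 ⟨ν, hν, hρ⟩)),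
    ← add_sum_erase t _ (mem_insert_self _ _), ← add_sum_erase t _ (mem_insert_self _ _),
    inter_self, inter_self, card_upperCovers, add_smul, one_smul,
    sum_congr rfl fun ρ hρ => by rw [card_upperCovers_inter_of_ne (ne_of_mem_erase hρ).symm]]
  abel

end YoungDiagram

open YoungDiagram

lemma upDownStep_iff_mem {ρ μ : YoungDiagram} :
    UpDownStep ρ μ ↔ ρ ∈ lowerCovers μ ∪ upperCovers μ := by
  rw [UpDownStep, mem_union, mem_lowerCovers, mem_upperCovers]

section

variable {r : ℕ} {ρ μ : YoungDiagram}

lemma snoc_mem_upDownTableaux {S : Fin (r + 1) → YoungDiagram} (hS : S ∈ UpDownTableaux r ρ)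
    (hρμ : UpDownStep ρ μ) :
    (Fin.snoc S μ : Fin (r + 2) → YoungDiagram) ∈ UpDownTableaux (r + 1) μ := by
  refine ⟨?_, Fin.snoc_last _ _, Fin.lastCases ?_ fun i => ?_⟩
  · show (Fin.snoc S μ : Fin (r + 2) → YoungDiagram) (Fin.castSucc 0) = ⊥
    rw [Fin.snoc_castSucc]
    exact hS.1
  · rwa [Fin.snoc_castSucc, Fin.succ_last, Fin.snoc_last, hS.2.1]
  · rw [Fin.snoc_castSucc, Fin.succ_castSucc, Fin.snoc_castSucc]
    exact hS.2.2 i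

lemma init_mem_upDownTableaux {T : Fin (r + 2) → YoungDiagram}
    (hT : T ∈ UpDownTableaux (r + 1) μ) :
    Fin.init T ∈ UpDownTableaux r (T (Fin.last r).castSucc) :=
  ⟨hT.1, rfl, fun i => by
    have h := hT.2.2 i.castSucc
    rwa [Fin.succ_castSucc] at h⟩

lemma upDownStep_of_mem_upDownTableaux {T : Fin (r + 2) → YoungDiagram}
    (hT : T ∈ UpDownTableaux (r + 1) μ) : UpDownStep (T (Fin.last r).castSucc) μ := by
  simpa [hT.2.1] using hT.2.2 (Fin.last r)

end

def upDownTableauxSuccEquiv (r : ℕ) (μ : YoungDiagram) :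
    UpDownTableaux (r + 1) μ ≃ Σ ρ : ↥(lowerCovers μ ∪ upperCovers μ), UpDownTableaux r ρ where
  toFun T := ⟨⟨_, upDownStep_iff_mem.1 (upDownStep_of_mem_upDownTableaux T.2)⟩,
    ⟨Fin.init T.1, init_mem_upDownTableaux T.2⟩⟩
  invFun p := ⟨Fin.snoc p.2 μ, snoc_mem_upDownTableaux p.2.2 (upDownStep_iff_mem.2 p.1.2)⟩
  left_inv T :=
    Subtype.ext ((congrArg (Fin.snoc (Fin.init T.1)) T.2.2.1).symm.trans (Fin.snoc_init_self T.1))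
  right_inv := by
    rintro ⟨⟨ρ, hρ⟩, S, hS⟩
    obtain rfl : (Fin.snoc S μ : Fin (r + 2) → YoungDiagram) (Fin.last r).castSucc = ρ := by
      rw [Fin.snoc_castSucc]
      exact hS.2.1
    exact Sigma.ext rfl (heq_of_eq (Subtype.ext (Fin.init_snoc (α := fun _ => YoungDiagram) μ S)))

instance (r : ℕ) (μ : YoungDiagram) : Finite (UpDownTableaux r μ) := by
  induction r generalizing μ with
  | zero =>
    refine Set.Finite.subset (Set.finite_singleton fun _ => ⊥) fun T hT => ?_
    exact funext fun i => Fin.fin_one_eq_zero i ▸ hT.1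
  | succ r ih => exact Finite.of_equiv _ (upDownTableauxSuccEquiv r μ).symm

lemma ncard_upDownTableaux_zero (μ : YoungDiagram) :
    (UpDownTableaux 0 μ).ncard = if μ = ⊥ then 1 else 0 := by
  split_ifs with h
  · subst h
    refine Set.ncard_eq_one.2 ⟨fun _ => ⊥, Set.eq_singleton_iff_unique_mem.2 ⟨?_, ?_⟩⟩
    · exact ⟨rfl, rfl, Fin.elim0⟩
    · exact fun T hT => funext fun i => Fin.fin_one_eq_zero i ▸ hT.1
  · rw [Set.eq_empty_of_forall_notMem fun T (hT : T ∈ UpDownTableaux 0 μ) => h (hT.2.1 ▸ hT.1),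
      Set.ncard_empty]

lemma ncard_upDownTableaux_succ (r : ℕ) (μ : YoungDiagram) :
    (UpDownTableaux (r + 1) μ).ncard =
      ∑ ρ ∈ lowerCovers μ, (UpDownTableaux r ρ).ncard +
        ∑ ν ∈ upperCovers μ, (UpDownTableaux r ν).ncard := by
  have hdisj : Disjoint (lowerCovers μ) (upperCovers μ) := disjoint_left.2 fun ρ h₁ h₂ => by
    have := (mem_lowerCovers.1 h₁).2
    have := (mem_upperCovers.1 h₂).2
    omega
  rw [← Nat.card_coe_set_eq, Nat.card_congr (upDownTableauxSuccEquiv r μ), Nat.card_sigma,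
    sum_coe_sort (lowerCovers μ ∪ upperCovers μ) fun ρ => Nat.card (UpDownTableaux r ρ),
    sum_union hdisj]
  simp only [Nat.card_coe_set_eq]

lemma sum_upperCovers_ncard_upDownTableaux_zero (μ : YoungDiagram) :
    ∑ ν ∈ upperCovers μ, (UpDownTableaux 0 ν).ncard = 0 :=
  sum_eq_zero fun ν hν => by
    have := (mem_upperCovers.1 hν).2
    rw [ncard_upDownTableaux_zero, if_neg (by rintro rfl; simp [card_bot] at this)]

theorem sum_upperCovers_ncard_upDownTableaux (r : ℕ) (μ : YoungDiagram) :
    ∑ ν ∈ upperCovers μ, (UpDownTableaux (r + 1) ν).ncard =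
      (r + 1) * (UpDownTableaux r μ).ncard := by
  induction r generalizing μ with
  | zero =>
    simp_rw [ncard_upDownTableaux_succ, sum_add_distrib, sum_upperCovers_sum_lowerCovers,
      sum_upperCovers_ncard_upDownTableaux_zero, sum_const_zero]
    ring
  | succ r ih =>
    simp_rw [ncard_upDownTableaux_succ (r + 1), sum_add_distrib, sum_upperCovers_sum_lowerCovers,
      ih, ← mul_sum, ncard_upDownTableaux_succ r μ]
    ring

lemma ncard_upDownTableaux_add_two_bot (r : ℕ) :
    (UpDownTableaux (r + 2) ⊥).ncard = (r + 1) * (UpDownTableaux r ⊥).ncard := by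
  rw [ncard_upDownTableaux_succ, lowerCovers_bot, sum_empty, zero_add,
    sum_upperCovers_ncard_upDownTableaux]

theorem upDownTableaux_empty_shape_count (r : ℕ) :
    (UpDownTableaux r ⊥).ncard = if Odd r then 0 else Nat.doubleFactorial (r - 1) := by
  induction r using Nat.twoStepInduction with
  | zero => simp [ncard_upDownTableaux_zero]
  | one =>
    rw [ncard_upDownTableaux_succ, lowerCovers_bot, sum_empty, zero_add,
      sum_upperCovers_ncard_upDownTableaux_zero, if_pos odd_one]
  | more r ih _ =>
    rw [ncard_upDownTableaux_add_two_bot, ih]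
    rcases Nat.even_or_odd r with h | h
    · rw [if_neg (Nat.not_odd_iff_even.2 h), if_neg (Nat.not_odd_iff_even.2 (h.add even_two))]
      exact (Nat.doubleFactorial_add_one r).symm
    · rw [if_pos h, if_pos (h.add_even even_two), mul_zero]
end
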